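/- Define f_1(z) = (371 - 524 cos z + 172 cos 2z - 20 cos 3z + cos 4z - 72z²(1 - cos z))/(18z⁴) + μ²(101 - 16 cos z - 100 cos 2z + 16 cos 3z - cos 4z - 144 z sin z)/(72 z²), where μ is a real parameter. Then for every μ there exists z₀ > 0 with z₀ < π such that f_1(z) > 0 for all z with 0 < |z| ≤ z₀. In particular one may take z₀ = sqrt(6(98μ² + 91 - sqrt(10661 - 4004μ² + 9604μ⁴))/(156μ² - 17)) when 156μ² ≠ 17, and z₀ = 6·sqrt(130/1133) when 156μ² = 17. -/

import Mathlib

/-- The function `f_1(z)` in its trigonometric form, with parameter `μ`. -/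
noncomputable def fOne (mu z : ℝ) : ℝ :=
  (371 - 524 * Real.cos z + 172 * Real.cos (2*z) - 20 * Real.cos (3*z)
      + Real.cos (4*z) - 72 * z^2 * (1 - Real.cos z)) / (18 * z^4)
  + mu^2 * (101 - 16 * Real.cos z - 100 * Real.cos (2*z) + 16 * Real.cos (3*z)
      - Real.cos (4*z) - 144 * z * Real.sin z) / (72 * z^2)

/-- The explicit radius `z₀` of Lemma 1. -/
noncomputable def zZero (mu : ℝ) : ℝ :=
  if 156 * mu^2 = 17 then 6 * Real.sqrt (130/1133)
  else Real.sqrt (6 * (98*mu^2 + 91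
    - Real.sqrt (10661 - 4004*mu^2 + 9604*mu^4)) / (156*mu^2 - 17))

/-!
Put `u = 1 - cos z` and `t = z²`. The multiple-angle formulas give
`9 t² f₁ = 4u(u³ + 6u² + 18u - 9t) + μ² t (36u - 6u² - 4u³ - u⁴ - 18 z sin z)`.
The alternating Taylor bounds for `cos` and `sin` squeeze `u` and `z sin z` between polynomials
in `t`, which makes the first term positive for `t ≤ 13/3`. The second term may be negative, but
`z₀²` is the smaller positive root of `(156μ² - 17)t² - 12(98μ² + 91)t + 5040`, so for `t ≤ z₀²`
we have `12μ²t(98 - 13t) ≤ 5040 - 1092t - 17t²`. Using this bound for `μ²` leaves a polynomial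
inequality in `t` alone on `(0, 13/3]`, and `z₀² < 13/3`.
-/

open Real Finset
open scoped Nat

theorem nonneg_of_hasDerivAt_nonneg {f f' : ℝ → ℝ} (hf : ∀ x, HasDerivAt f (f' x) x)
    (h0 : 0 ≤ f 0) (hf' : ∀ x, 0 ≤ x → 0 ≤ f' x) {x : ℝ} (hx : 0 ≤ x) : 0 ≤ f x := by
  have hmono : MonotoneOn f (Set.Ici 0) :=
    monotoneOn_of_hasDerivWithinAt_nonneg (convex_Ici 0)
      (fun y _ => (hf y).continuousAt.continuousWithinAt) (fun y _ => (hf y).hasDerivWithinAt)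
      (fun y hy => hf' y (interior_subset hy))
  exact h0.trans (hmono Set.self_mem_Ici hx hx)

noncomputable def cosTaylor (n : ℕ) (x : ℝ) : ℝ := ∑ k ∈ range n, (-1) ^ k * x ^ (2 * k) / (2 * k)!

noncomputable def sinTaylor (n : ℕ) (x : ℝ) : ℝ :=
  ∑ k ∈ range n, (-1) ^ k * x ^ (2 * k + 1) / (2 * k + 1)!

theorem hasDerivAt_sinTaylor (n : ℕ) (x : ℝ) : HasDerivAt (sinTaylor n) (cosTaylor n x) x := by
  unfold sinTaylor cosTaylor
  refine HasDerivAt.fun_sum fun k _ => ?_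
  refine (((hasDerivAt_pow (2 * k + 1) x).const_mul ((-1 : ℝ) ^ k)).div_const
    ((2 * k + 1)! : ℝ)).congr_deriv ?_
  rw [Nat.factorial_succ]
  push_cast
  field_simp

theorem hasDerivAt_cosTaylor_succ (n : ℕ) (x : ℝ) :
    HasDerivAt (cosTaylor (n + 1)) (-sinTaylor n x) x := by
  have hshift : cosTaylor (n + 1) =
      fun y => ∑ k ∈ range n, (-1 : ℝ) ^ (k + 1) * y ^ (2 * k + 2) / (2 * k + 2)! + 1 := by
    funext y
    simp [cosTaylor, sum_range_succ', mul_add]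
  rw [hshift, sinTaylor, ← sum_neg_distrib]
  refine (HasDerivAt.fun_sum fun k _ => ?_).add_const 1
  refine (((hasDerivAt_pow (2 * k + 2) x).const_mul ((-1 : ℝ) ^ (k + 1))).div_const
    ((2 * k + 2)! : ℝ)).congr_deriv ?_
  rw [Nat.factorial_succ]
  push_cast
  field_simp
  ring

theorem cosTaylor_apply_zero {n : ℕ} (hn : n ≠ 0) : cosTaylor n 0 = 1 := by
  obtain ⟨n, rfl⟩ := Nat.exists_eq_succ_of_ne_zero hn
  simp [cosTaylor, sum_range_succ']

theorem sin_sub_sinTaylor_alternating {n : ℕ}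
    (hcos : ∀ x, 0 ≤ x → 0 ≤ (-1) ^ n * (cos x - cosTaylor n x)) {x : ℝ} (hx : 0 ≤ x) :
    0 ≤ (-1) ^ n * (sin x - sinTaylor n x) :=
  nonneg_of_hasDerivAt_nonneg (f := fun y => (-1) ^ n * (sin y - sinTaylor n y))
    (fun y => ((hasDerivAt_sin y).sub (hasDerivAt_sinTaylor n y)).const_mul _)
    (by simp [sinTaylor]) hcos hx

theorem cos_sub_cosTaylor_alternating_succ {n : ℕ}
    (hsin : ∀ x, 0 ≤ x → 0 ≤ (-1) ^ n * (sin x - sinTaylor n x)) {x : ℝ} (hx : 0 ≤ x) :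
    0 ≤ (-1) ^ (n + 1) * (cos x - cosTaylor (n + 1) x) :=
  nonneg_of_hasDerivAt_nonneg (f := fun y => (-1) ^ (n + 1) * (cos y - cosTaylor (n + 1) y))
    (fun y => ((hasDerivAt_cos y).sub (hasDerivAt_cosTaylor_succ n y)).const_mul _)
    (by simp [cosTaylor_apply_zero]) (fun y hy => by linear_combination hsin y hy) hx

theorem cos_sub_cosTaylor_alternating (n : ℕ) {x : ℝ} (hx : 0 ≤ x) :
    0 ≤ (-1) ^ (n + 1) * (cos x - cosTaylor (n + 1) x) := by
  induction n generalizing x with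
  | zero => simpa [cosTaylor] using cos_le_one x
  | succ n ih =>
    exact cos_sub_cosTaylor_alternating_succ
      (fun _ hy => sin_sub_sinTaylor_alternating (fun _ hz => ih hz) hy) hx

theorem cos_le_taylor_eight {x : ℝ} (hx : 0 ≤ x) :
    cos x ≤ 1 - x ^ 2 / 2 + x ^ 4 / 24 - x ^ 6 / 720 + x ^ 8 / 40320 := by
  have := cos_sub_cosTaylor_alternating 4 hx
  norm_num [cosTaylor, sum_range_succ, Nat.factorial] at this
  linarith

theorem taylor_six_le_cos {x : ℝ} (hx : 0 ≤ x) :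
    1 - x ^ 2 / 2 + x ^ 4 / 24 - x ^ 6 / 720 ≤ cos x := by
  have := cos_sub_cosTaylor_alternating 3 hx
  norm_num [cosTaylor, sum_range_succ, Nat.factorial] at this
  linarith

theorem sin_le_taylor_nine {x : ℝ} (hx : 0 ≤ x) :
    sin x ≤ x - x ^ 3 / 6 + x ^ 5 / 120 - x ^ 7 / 5040 + x ^ 9 / 362880 := by
  have := sin_sub_sinTaylor_alternating (fun _ hy => cos_sub_cosTaylor_alternating 4 hy) hx
  norm_num [sinTaylor, sum_range_succ, Nat.factorial] at this
  linarith

theorem quadratic_nonneg_of_le_root {a β c s τ t : ℝ} (hs : 0 ≤ s) (hβs : 0 < β + s)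
    (hdisc : s ^ 2 = β ^ 2 - a * c) (hτ : τ * (β + s) = c) (ht0 : 0 ≤ t) (ht : t ≤ τ) :
    0 ≤ a * t ^ 2 - 2 * β * t + c := by
  have haτ : a * τ = β - s := by
    apply mul_right_cancel₀ hβs.ne'
    linear_combination a * hτ + hdisc
  have hfactor : a * t ^ 2 - 2 * β * t + c = (τ - t) * (β + s - a * t) := by
    linear_combination -hτ + t * haτ
  have hat : a * t ≤ β + s := by
    rcases le_total a 0 with ha | ha
    · exact (mul_nonpos_of_nonpos_of_nonneg ha ht0).trans hβs.le
    · exact (mul_le_mul_of_nonneg_left ht ha).trans (by linarith)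
  rw [hfactor]
  exact mul_nonneg (sub_nonneg.2 ht) (sub_nonneg.2 hat)

theorem sq_sqrt_zZero_discriminant (mu : ℝ) :
    √(10661 - 4004 * mu ^ 2 + 9604 * mu ^ 4) ^ 2
      = (98 * mu ^ 2 + 91) ^ 2 - 140 * (156 * mu ^ 2 - 17) := by
  rw [sq_sqrt (by nlinarith [sq_nonneg (mu ^ 2)])]
  ring

/-- With `b = 98μ² + 91` and `s` the square root, rationalizing `6(b - s)/(156μ² - 17)` gives
`840/(b + s)`, a form that also covers the branch `156μ² = 17`. -/
theorem sq_zZero (mu : ℝ) :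
    zZero mu ^ 2 = 840 / (98 * mu ^ 2 + 91 + √(10661 - 4004 * mu ^ 2 + 9604 * mu ^ 4)) := by
  unfold zZero
  have hdisc := sq_sqrt_zZero_discriminant mu
  set s := √(10661 - 4004 * mu ^ 2 + 9604 * mu ^ 4)
  have hs : 0 ≤ s := sqrt_nonneg _
  have hbs : 0 < 98 * mu ^ 2 + 91 + s := by positivity
  split_ifs with ha
  · have hsb : s = 98 * mu ^ 2 + 91 := by nlinarith
    rw [hsb, mul_pow, sq_sqrt (by norm_num)]
    field_simp
    linear_combination 5880 * ha
  · have hroot :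
        6 * (98 * mu ^ 2 + 91 - s) / (156 * mu ^ 2 - 17) = 840 / (98 * mu ^ 2 + 91 + s) := by
      rw [div_eq_div_iff (sub_ne_zero.2 ha) hbs.ne']
      linear_combination -6 * hdisc
    rw [hroot, sq_sqrt (by positivity)]

theorem zZero_pos (mu : ℝ) : 0 < zZero mu := by
  have hnonneg : 0 ≤ zZero mu := by unfold zZero; split_ifs <;> positivity
  have hsq : 0 < zZero mu ^ 2 := by rw [sq_zZero]; positivity
  exact lt_of_le_of_ne hnonneg (by rintro h; simp [← h] at hsq)

theorem sq_zZero_lt (mu : ℝ) : zZero mu ^ 2 < 13 / 3 := by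
  have hdisc := sq_sqrt_zZero_discriminant mu
  have hs := sqrt_nonneg (10661 - 4004 * mu ^ 2 + 9604 * mu ^ 4)
  rw [sq_zZero, div_lt_iff₀ (by positivity)]
  nlinarith [sq_nonneg mu]

theorem mu_sq_mul_le_of_le_sq_zZero {mu t : ℝ} (ht0 : 0 ≤ t) (ht : t ≤ zZero mu ^ 2) :
    mu ^ 2 * (12 * t * (98 - 13 * t)) ≤ 5040 - 1092 * t - 17 * t ^ 2 := by
  rw [sq_zZero] at ht
  have hdisc := sq_sqrt_zZero_discriminant mu
  set s := √(10661 - 4004 * mu ^ 2 + 9604 * mu ^ 4)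
  have hs : 0 ≤ s := sqrt_nonneg _
  have hbs : 0 < 98 * mu ^ 2 + 91 + s := by positivity
  have := quadratic_nonneg_of_le_root (a := 156 * mu ^ 2 - 17) (β := 6 * (98 * mu ^ 2 + 91))
    (c := 5040) (by positivity : 0 ≤ 6 * s) (by positivity) (by linear_combination 36 * hdisc)
    (by field_simp; ring) ht0 ht
  linarith

theorem pos_add_mul_of_lower_bounds {a b a₀ b₀ m p q : ℝ} (ha : 0 < a) (ha₀ : a₀ ≤ a)
    (hb₀ : b₀ ≤ b) (hm : 0 ≤ m) (hq : 0 < q) (hmq : m * q ≤ p) (hkey : 0 < q * a₀ + p * b₀) :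
    0 < a + m * b := by
  rcases le_or_gt 0 b with hb | hb
  · nlinarith [mul_nonneg hm hb]
  · have hp : 0 ≤ p := (mul_nonneg hm hq.le).trans hmq
    refine pos_of_mul_pos_right (a := q) ?_ hq.le
    calc 0 < q * a₀ + p * b₀ := hkey
      _ ≤ q * a + p * b := by gcongr
      _ ≤ q * a + (m * q) * b := by linarith [mul_le_mul_of_nonpos_right hmq hb.le]
      _ = q * (a + m * b) := by ring

theorem versin_taylor_pos {t : ℝ} (ht : 0 < t) (ht13 : t ≤ 13 / 3) :
    0 < t / 2 - t ^ 2 / 24 + t ^ 3 / 720 - t ^ 4 / 40320 := by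
  have c k := mul_le_mul_of_nonneg_right ht13 (pow_nonneg ht.le k)
  nlinarith [c 1, c 2, c 3, pow_pos ht 2, pow_pos ht 3, pow_pos ht 4]

theorem versin_taylor_cubic_pos {t L : ℝ} (ht : 0 < t) (ht13 : t ≤ 13 / 3)
    (hL : L = t / 2 - t ^ 2 / 24 + t ^ 3 / 720 - t ^ 4 / 40320) :
    0 < L ^ 3 + 6 * L ^ 2 + 18 * L - 9 * t := by
  have c k := mul_le_mul_of_nonneg_right ht13 (pow_nonneg ht.le k)
  have n k := pow_nonneg ht.le k
  have hη : 0 < 3/4 - 1/10*t - 29/2240*t^2 + 113/40320*t^3 - 97/403200*t^4 + 31/2419200*t^5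
      - 191/406425600*t^6 + 1787/146313216000*t^7 - 43/195084288000*t^8
      + 1/390168576000*t^9 - 1/65548320768000*t^10 := by
    nlinarith [c 1, c 2, c 3, c 4, c 5, c 6, c 7, c 8, c 9,
      n 2, n 3, n 4, n 5, n 6, n 7, n 8, n 9, n 10]
  have hfactor : L ^ 3 + 6 * L ^ 2 + 18 * L - 9 * t = t ^ 2 * (3/4 - 1/10*t - 29/2240*t^2
      + 113/40320*t^3 - 97/403200*t^4 + 31/2419200*t^5 - 191/406425600*t^6
      + 1787/146313216000*t^7 - 43/195084288000*t^8 + 1/390168576000*t^9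
      - 1/65548320768000*t^10) := by
    rw [hL]; ring
  rw [hfactor]
  exact mul_pos (pow_pos ht 2) hη

theorem key_polynomial_pos {t L U S : ℝ} (ht : 0 < t) (ht13 : t ≤ 13 / 3)
    (hL : L = t / 2 - t ^ 2 / 24 + t ^ 3 / 720 - t ^ 4 / 40320)
    (hU : U = t / 2 - t ^ 2 / 24 + t ^ 3 / 720)
    (hS : S = t - t ^ 2 / 6 + t ^ 3 / 120 - t ^ 4 / 5040 + t ^ 5 / 362880) :
    0 < 12 * t * (98 - 13 * t) * (4 * L * (L ^ 3 + 6 * L ^ 2 + 18 * L - 9 * t))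
      + (5040 - 1092 * t - 17 * t ^ 2)
        * (t * (36 * L - 6 * U ^ 2 - 4 * U ^ 3 - U ^ 4 - 18 * S)) := by
  have c k := mul_le_mul_of_nonneg_right ht13 (pow_nonneg ht.le k)
  have n k := pow_nonneg ht.le k
  have hR : 0 < 139/4 - 13039/1200*t + 17051/11200*t^2 - 12931/120960*t^3
      + 1259101/508032000*t^4 + 258757/1219276800*t^5 - 529/22861440*t^6
      + 2418781/2194698240000*t^7 - 320771/10241925120000*t^8
      + 103267/184354652160000*t^9 - 79/12290310144000*t^10
      + 43/786579849216000*t^11 - 13/55060589445120000*t^12 := by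
    nlinarith [c 1, c 2, c 3, c 4, c 5, c 6, c 7, c 8, c 9, c 10, c 11,
      n 2, n 3, n 4, n 5, n 6, n 7, n 8, n 9, n 10, n 11, n 12]
  have hfactor : 12 * t * (98 - 13 * t) * (4 * L * (L ^ 3 + 6 * L ^ 2 + 18 * L - 9 * t))
      + (5040 - 1092 * t - 17 * t ^ 2)
        * (t * (36 * L - 6 * U ^ 2 - 4 * U ^ 3 - U ^ 4 - 18 * S))
      = t ^ 6 * (139/4 - 13039/1200*t + 17051/11200*t^2 - 12931/120960*t^3
      + 1259101/508032000*t^4 + 258757/1219276800*t^5 - 529/22861440*t^6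
      + 2418781/2194698240000*t^7 - 320771/10241925120000*t^8
      + 103267/184354652160000*t^9 - 79/12290310144000*t^10
      + 43/786579849216000*t^11 - 13/55060589445120000*t^12) := by
    rw [hL, hU, hS]; ring
  rw [hfactor]
  exact mul_pos (pow_pos ht 6) hR

theorem fOne_mul_eq {mu w u : ℝ} (hw : w ≠ 0) (hu : cos w = 1 - u) :
    9 * w ^ 4 * fOne mu w = 4 * u * (u ^ 3 + 6 * u ^ 2 + 18 * u - 9 * w ^ 2)
      + mu ^ 2 * (w ^ 2 * (36 * u - 6 * u ^ 2 - 4 * u ^ 3 - u ^ 4 - 18 * (w * sin w))) := by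
  have h4 : cos (4 * w) = 2 * cos (2 * w) ^ 2 - 1 := by
    rw [show 4 * w = 2 * (2 * w) by ring, cos_two_mul]
  rw [fOne, h4, cos_three_mul, cos_two_mul, hu]
  field_simp
  ring

theorem fOne_neg (mu z : ℝ) : fOne mu (-z) = fOne mu z := by
  simp only [fOne, mul_neg, cos_neg, sin_neg, neg_mul, neg_neg, even_two, Even.neg_pow,
    show Even 4 by decide]

theorem fOne_pos_of_mu_sq_mul_le {mu w : ℝ} (hw : 0 < w) (hw13 : w ^ 2 ≤ 13 / 3)
    (hmu : mu ^ 2 * (12 * w ^ 2 * (98 - 13 * w ^ 2)) ≤ 5040 - 1092 * w ^ 2 - 17 * (w ^ 2) ^ 2) :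
    0 < fOne mu w := by
  obtain ⟨t, ht_def⟩ : ∃ t, t = w ^ 2 := ⟨_, rfl⟩
  obtain ⟨u, hu⟩ : ∃ u, u = 1 - cos w := ⟨_, rfl⟩
  obtain ⟨L, hL⟩ : ∃ L, L = t / 2 - t ^ 2 / 24 + t ^ 3 / 720 - t ^ 4 / 40320 := ⟨_, rfl⟩
  obtain ⟨U, hU⟩ : ∃ U, U = t / 2 - t ^ 2 / 24 + t ^ 3 / 720 := ⟨_, rfl⟩
  obtain ⟨S, hS⟩ : ∃ S, S = t - t ^ 2 / 6 + t ^ 3 / 120 - t ^ 4 / 5040 + t ^ 5 / 362880 :=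
    ⟨_, rfl⟩
  have ht : 0 < t := by rw [ht_def]; positivity
  have ht13 : t ≤ 13 / 3 := ht_def ▸ hw13
  have hLu : L ≤ u := by rw [hL, hu, ht_def]; linarith [cos_le_taylor_eight hw.le]
  have huU : u ≤ U := by rw [hU, hu, ht_def]; linarith [taylor_six_le_cos hw.le]
  have hsin : w * sin w ≤ S := by
    rw [hS, ht_def]; nlinarith [mul_le_mul_of_nonneg_left (sin_le_taylor_nine hw.le) hw.le]
  have hL0 : 0 < L := hL ▸ versin_taylor_pos ht ht13
  have hu0 : 0 ≤ u := hL0.le.trans hLu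
  have hgL := versin_taylor_cubic_pos ht ht13 hL
  have hg : L ^ 3 + 6 * L ^ 2 + 18 * L - 9 * t ≤ u ^ 3 + 6 * u ^ 2 + 18 * u - 9 * t := by
    gcongr
  have hid := fOne_mul_eq (mu := mu) hw.ne' (by rw [hu]; ring : cos w = 1 - u)
  rw [← ht_def] at hid hmu
  have : 0 < 9 * w ^ 4 * fOne mu w := by
    rw [hid]
    refine pos_add_mul_of_lower_bounds
      (mul_pos (by linarith) (hgL.trans_le hg)) ?_ ?_ (sq_nonneg mu)
      (mul_pos (by positivity) (by linarith)) hmu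
      (key_polynomial_pos ht ht13 hL hU hS) <;> gcongr
  exact pos_of_mul_pos_right this (by positivity)

theorem fOne_abs (mu z : ℝ) : fOne mu |z| = fOne mu z := by
  rcases abs_choice z with h | h <;> simp [h, fOne_neg]

theorem stmt_5 (mu : ℝ) :
    0 < zZero mu ∧ zZero mu < Real.pi ∧
      ∀ z : ℝ, 0 < |z| → |z| ≤ zZero mu → 0 < fOne mu z := by
  have hz₀ := zZero_pos mu
  have hz₀13 := sq_zZero_lt mu
  refine ⟨hz₀, by nlinarith [pi_gt_three], fun z hz hzz₀ => ?_⟩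
  have hsq : |z| ^ 2 ≤ zZero mu ^ 2 := pow_le_pow_left₀ (abs_nonneg z) hzz₀ 2
  rw [← fOne_abs]
  exact fOne_pos_of_mu_sq_mul_le hz (hsq.trans hz₀13.le)
    (mu_sq_mul_le_of_le_sq_zZero (sq_nonneg _) hsq)
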